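/- Let H be a finite simple graph and let A ⊆ V(H) be nonempty with H[A] connected, S := N_H(A), and suppose there exists a connected component B of H − N_H[A] with N_H(B) = S (i.e., N_H[A] induces a separator chunk). Let a1, a2 ∈ A be distinct and let Z ⊆ N_H[A] ∖ {a1, a2} be a set separating a1 from a2 in the induced subgraph H[N_H[A]]. Then there exists a nonempty set A' ⊆ V(H) with H[A'] connected such that: (a) a1 ∈ A' or a2 ∈ A'; (b) N_H[A'] is a proper subset of N_H[A]; (c) N_H(A') ⊆ Z ∪ S; and (d) N_H(A') is a minimal separator of H. -/

import Mathlib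

/-!
The set `Z ∪ N(A)` separates `a1` from `a2`, because a walk avoiding `N(A)` stays inside `A`.
Shrinking it to the neighbourhood of the component of `a1` in its complement, and that in turn
to the neighbourhood of the component of `a2`, gives a separator `T ⊆ Z ∪ N(A)` whose
components containing `a1` and `a2` are both full, so `T` is a minimal separator. Since
`T ⊆ N[A]` misses the chunk component `B` and every vertex of `N(A) = N(B)` sees `B`, all
vertices of `N(A) \ T` lie in one component of `H − T`. So the component of `a1` or that of `a2`
misses `N(A)`; it then lies in `A` and is the required `A'`.
-/

/-- The (open) neighborhood of a set `A`: vertices outside `A` with a neighbor in `A`. -/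
def nbhd {V : Type*} (H : SimpleGraph V) (A : Set V) : Set V :=
  {v | v ∉ A ∧ ∃ a ∈ A, H.Adj a v}

/-- `S` is an `xy`-separator: `x, y ∉ S` and `x` and `y` lie in different connected
components of `H − S`, i.e. every walk from `x` to `y` in `H` meets `S`. -/
def IsSep {V : Type*} (H : SimpleGraph V) (x y : V) (S : Set V) : Prop :=
  x ∉ S ∧ y ∉ S ∧ ∀ p : H.Walk x y, ∃ v ∈ p.support, v ∈ S

/-- `S` is a minimal `xy`-separator: no proper subset of `S` is an `xy`-separator. -/
def IsMinSep {V : Type*} (H : SimpleGraph V) (x y : V) (S : Set V) : Prop :=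
  IsSep H x y S ∧ ∀ S' ⊂ S, ¬ IsSep H x y S'

open SimpleGraph

/-- The vertex set of the component of `a` in `H − T` (empty when `a ∈ T`). -/
def reachAvoiding {V : Type*} (H : SimpleGraph V) (T : Set V) (a : V) : Set V :=
  {w | ∃ p : H.Walk a w, ∀ u ∈ p.support, u ∉ T}

def IsFullSep {V : Type*} (H : SimpleGraph V) (a b : V) (T : Set V) : Prop :=
  IsSep H a b T ∧ T ⊆ nbhd H (reachAvoiding H T a) ∧ T ⊆ nbhd H (reachAvoiding H T b)

section

variable {V : Type*} {H : SimpleGraph V} {A C D T T' : Set V} {a b s s' v w x : V}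

theorem SimpleGraph.Walk.exists_mem_nbhd {y : V} (p : H.Walk x y) (hx : x ∈ C) (hy : y ∉ C) :
    ∃ u ∈ p.support, u ∈ nbhd H C := by
  obtain ⟨d, hd, hfst, hsnd⟩ := p.exists_boundary_dart C hx hy
  exact ⟨d.snd, p.dart_snd_mem_support_of_mem_darts hd, hsnd, d.fst, hfst, d.adj⟩

theorem SimpleGraph.Walk.support_subset_of_forall_notMem_nbhd {y : V} (p : H.Walk x y)
    (hx : x ∈ C) (hp : ∀ u ∈ p.support, u ∉ nbhd H C) : ∀ u ∈ p.support, u ∈ C := by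
  classical
  intro u hu
  by_contra huC
  obtain ⟨w, hw, hwN⟩ := (p.takeUntil u hu).exists_mem_nbhd hx huC
  exact hp w (p.support_takeUntil_subset_support hu hw) hwN

theorem mem_reachAvoiding_self (ha : a ∉ T) : a ∈ reachAvoiding H T a :=
  ⟨.nil, by simpa using ha⟩

theorem notMem_of_mem_reachAvoiding (hw : w ∈ reachAvoiding H T a) : w ∉ T :=
  hw.elim fun p hp => hp w p.end_mem_support

theorem mem_reachAvoiding_of_adj (hw : w ∈ reachAvoiding H T a) (hadj : H.Adj w x)
    (hx : x ∉ T) : x ∈ reachAvoiding H T a := by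
  obtain ⟨p, hp⟩ := hw
  refine ⟨p.concat hadj, fun u hu => ?_⟩
  rw [Walk.support_concat, List.mem_append, List.mem_singleton] at hu
  rcases hu with hu | rfl
  exacts [hp u hu, hx]

theorem reachAvoiding_symm (hw : w ∈ reachAvoiding H T a) : a ∈ reachAvoiding H T w := by
  obtain ⟨p, hp⟩ := hw
  exact ⟨p.reverse, fun u hu => hp u (by rwa [Walk.support_reverse, List.mem_reverse] at hu)⟩

theorem reachAvoiding_trans (hw : w ∈ reachAvoiding H T a) (hx : x ∈ reachAvoiding H T w) :
    x ∈ reachAvoiding H T a := by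
  obtain ⟨p, hp⟩ := hw
  obtain ⟨q, hq⟩ := hx
  refine ⟨p.append q, fun u hu => ?_⟩
  rcases (Walk.mem_support_append_iff p q).mp hu with hu | hu
  exacts [hp u hu, hq u hu]

theorem reachAvoiding_anti (hT : T ⊆ T') : reachAvoiding H T' a ⊆ reachAvoiding H T a :=
  fun _ ⟨p, hp⟩ => ⟨p, fun u hu huT => hp u hu (hT huT)⟩

theorem support_subset_reachAvoiding {p : H.Walk a w} (hp : ∀ u ∈ p.support, u ∉ T) :
    ∀ u ∈ p.support, u ∈ reachAvoiding H T a := by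
  classical
  intro u hu
  exact ⟨p.takeUntil u hu, fun x hx => hp x (p.support_takeUntil_subset_support hu hx)⟩

theorem connected_induce_reachAvoiding (ha : a ∉ T) :
    (H.induce (reachAvoiding H T a)).Connected :=
  H.induce_connected_of_patches a (mem_reachAvoiding_self ha) fun ⟨p, hp⟩ =>
    ⟨{u | u ∈ p.support}, support_subset_reachAvoiding hp, p.start_mem_support,
      p.end_mem_support, p.connected_induce_support.preconnected _ _⟩

theorem nbhd_reachAvoiding_subset : nbhd H (reachAvoiding H T a) ⊆ T := by
  rintro u ⟨hu, w, hw, hadj⟩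
  by_contra huT
  exact hu (mem_reachAvoiding_of_adj hw hadj huT)

theorem reachAvoiding_subset_of_disjoint (ha : a ∈ C)
    (h : Disjoint (reachAvoiding H T a) (nbhd H C)) : reachAvoiding H T a ⊆ C := by
  rintro w ⟨p, hp⟩
  refine p.support_subset_of_forall_notMem_nbhd ha (fun u hu => ?_) w p.end_mem_support
  exact Set.disjoint_left.mp h (support_subset_reachAvoiding hp u hu)

theorem reachAvoiding_subset (ha : a ∈ C) (hC : nbhd H C ⊆ T) : reachAvoiding H T a ⊆ C :=
  reachAvoiding_subset_of_disjoint ha <|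
    Set.disjoint_left.mpr fun _ hu hN => notMem_of_mem_reachAvoiding hu (hC hN)

theorem subset_nbhd_reachAvoiding (hC : C ⊆ reachAvoiding H T a) (hT : T ⊆ nbhd H C) :
    T ⊆ nbhd H (reachAvoiding H T a) := by
  intro t ht
  obtain ⟨-, x, hx, hxt⟩ := hT ht
  exact ⟨fun h => notMem_of_mem_reachAvoiding h ht, x, hC hx, hxt⟩

theorem reachAvoiding_nbhd_reachAvoiding (ha : a ∉ T) :
    reachAvoiding H (nbhd H (reachAvoiding H T a)) a = reachAvoiding H T a :=
  (reachAvoiding_subset (mem_reachAvoiding_self ha) subset_rfl).antisymm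
    (reachAvoiding_anti nbhd_reachAvoiding_subset)

theorem mem_reachAvoiding_of_mem_nbhd (hTD : T ⊆ D) (hs : s ∈ nbhd H (reachAvoiding H D v))
    (hs' : s' ∈ nbhd H (reachAvoiding H D v)) (hsT : s ∉ T) (hs'T : s' ∉ T) :
    s' ∈ reachAvoiding H T s := by
  obtain ⟨-, b, hb, hbs⟩ := hs
  obtain ⟨-, b', hb', hb's'⟩ := hs'
  have hbT : b ∈ reachAvoiding H T s := mem_reachAvoiding_of_adj (mem_reachAvoiding_self hsT)
    hbs.symm fun h => notMem_of_mem_reachAvoiding hb (hTD h)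
  have hb'T : b' ∈ reachAvoiding H T s :=
    reachAvoiding_trans hbT <|
      reachAvoiding_anti hTD (reachAvoiding_trans (reachAvoiding_symm hb) hb')
  exact mem_reachAvoiding_of_adj hb'T hb's' hs'T

theorem isSep_iff : IsSep H a b T ↔ a ∉ T ∧ b ∉ T ∧ b ∉ reachAvoiding H T a := by
  refine and_congr_right' (and_congr_right' ⟨fun h ⟨p, hp⟩ => ?_, fun h p => ?_⟩)
  · obtain ⟨u, hu, huT⟩ := h p
    exact hp u hu huT
  · by_contra! hp
    exact h ⟨p, hp⟩

theorem IsSep.symm (h : IsSep H a b T) : IsSep H b a T := by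
  rw [isSep_iff] at h ⊢
  exact ⟨h.2.1, h.1, fun hba => h.2.2 (reachAvoiding_symm hba)⟩

theorem IsSep.disjoint_or_disjoint (h : IsSep H a b T) (hTD : T ⊆ D) :
    Disjoint (reachAvoiding H T a) (nbhd H (reachAvoiding H D v)) ∨
      Disjoint (reachAvoiding H T b) (nbhd H (reachAvoiding H D v)) := by
  rw [or_iff_not_imp_left, Set.not_disjoint_iff]
  rintro ⟨s, hsa, hsN⟩
  refine Set.disjoint_left.mpr fun s' hs'b hs'N => (isSep_iff.mp h).2.2 ?_
  have hs's := mem_reachAvoiding_of_mem_nbhd hTD hsN hs'N (notMem_of_mem_reachAvoiding hsa)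
    (notMem_of_mem_reachAvoiding hs'b)
  exact reachAvoiding_trans hsa (reachAvoiding_trans hs's (reachAvoiding_symm hs'b))

theorem IsFullSep.symm (h : IsFullSep H a b T) : IsFullSep H b a T :=
  ⟨h.1.symm, h.2.2, h.2.1⟩

theorem IsFullSep.isMinSep (h : IsFullSep H a b T) : IsMinSep H a b T := by
  refine ⟨h.1, fun T' hT' hsep => ?_⟩
  obtain ⟨t, htT, htT'⟩ := Set.exists_of_ssubset hT'
  obtain ⟨-, x, hx, hxt⟩ := h.2.1 htT
  obtain ⟨-, y, hy, hyt⟩ := h.2.2 htT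
  have hta : t ∈ reachAvoiding H T' a :=
    mem_reachAvoiding_of_adj (reachAvoiding_anti hT'.subset hx) hxt htT'
  have hya : y ∈ reachAvoiding H T' a :=
    mem_reachAvoiding_of_adj hta hyt.symm fun h => notMem_of_mem_reachAvoiding hy (hT'.subset h)
  exact (isSep_iff.mp hsep).2.2
    (reachAvoiding_trans hya (reachAvoiding_symm (reachAvoiding_anti hT'.subset hy)))

theorem IsSep.exists_isFullSep_subset (h : IsSep H a b T) : ∃ T' ⊆ T, IsFullSep H a b T' := by
  obtain ⟨haT, hbT, hab⟩ := isSep_iff.mp h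
  set T₁ := nbhd H (reachAvoiding H T a)
  set T₂ := nbhd H (reachAvoiding H T₁ b)
  have hT₁ : T₁ ⊆ T := nbhd_reachAvoiding_subset
  have hT₂ : T₂ ⊆ T₁ := nbhd_reachAvoiding_subset
  have hbT₁ : b ∉ T₁ := fun hb => hbT (hT₁ hb)
  have hCa : reachAvoiding H T₁ a = reachAvoiding H T a := reachAvoiding_nbhd_reachAvoiding haT
  have hCb : reachAvoiding H T₂ b = reachAvoiding H T₁ b :=
    reachAvoiding_nbhd_reachAvoiding hbT₁
  have hsep : IsSep H a b T₂ := by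
    refine isSep_iff.mpr
      ⟨fun ha => haT (hT₁ (hT₂ ha)), fun hb => hbT₁ (hT₂ hb), fun hba => ?_⟩
    exact hab (hCa ▸ reachAvoiding_symm (hCb ▸ reachAvoiding_symm hba))
  exact ⟨T₂, hT₂.trans hT₁, hsep,
    subset_nbhd_reachAvoiding (reachAvoiding_anti (hT₂.trans hT₁)) hT₂,
    subset_nbhd_reachAvoiding (reachAvoiding_anti hT₂) subset_rfl⟩

theorem isSep_union_nbhd {Z : Set V} (ha : a ∈ A) (hb : b ∈ A) (haZ : a ∉ Z) (hbZ : b ∉ Z)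
    (hsep : ∀ p : H.Walk a b, (∀ u ∈ p.support, u ∈ A ∪ nbhd H A) →
      ∃ u ∈ p.support, u ∈ Z) :
    IsSep H a b (Z ∪ nbhd H A) := by
  refine ⟨fun h => h.elim haZ fun h => h.1 ha, fun h => h.elim hbZ fun h => h.1 hb, fun p => ?_⟩
  by_contra! hp
  have hpA := p.support_subset_of_forall_notMem_nbhd ha fun u hu h => hp u hu (Or.inr h)
  obtain ⟨u, hu, huZ⟩ := hsep p fun u hu => Or.inl (hpA u hu)
  exact hp u hu (Or.inl huZ)

theorem IsFullSep.exists_of_disjoint_nbhd (hT : IsFullSep H a b T) (ha : a ∈ A) (hb : b ∈ A)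
    (hTA : T ⊆ A ∪ nbhd H A) (hdisj : Disjoint (reachAvoiding H T a) (nbhd H A)) :
    ∃ A' : Set V, A'.Nonempty ∧ (H.induce A').Connected ∧ a ∈ A' ∧
      A' ∪ nbhd H A' ⊂ A ∪ nbhd H A ∧ nbhd H A' = T := by
  obtain ⟨haT, hbT, hab⟩ := isSep_iff.mp hT.1
  have hN : nbhd H (reachAvoiding H T a) = T := nbhd_reachAvoiding_subset.antisymm hT.2.1
  have hCA : reachAvoiding H T a ⊆ A := reachAvoiding_subset_of_disjoint ha hdisj
  refine ⟨_, ⟨a, mem_reachAvoiding_self haT⟩, connected_induce_reachAvoiding haT,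
    mem_reachAvoiding_self haT, ?_, hN⟩
  rw [hN, Set.ssubset_iff_of_subset (Set.union_subset (hCA.trans Set.subset_union_left) hTA)]
  exact ⟨b, Or.inl hb, fun h => h.elim hab hbT⟩

end

theorem separator_chunk_splitting_general {V : Type*} (H : SimpleGraph V)
    (A : Set V)
    (S : Set V) (hS : S = nbhd H A)
    (hB : ∃ v : V, v ∉ A ∪ nbhd H A ∧
        nbhd H {w | ∃ p : H.Walk v w, ∀ u ∈ p.support, u ∉ A ∪ nbhd H A} = S)
    (a1 a2 : V) (ha1 : a1 ∈ A) (ha2 : a2 ∈ A)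
    (Z : Set V) (hZ : Z ⊆ (A ∪ nbhd H A) \ {a1, a2})
    (hsep : ∀ p : H.Walk a1 a2, (∀ u ∈ p.support, u ∈ A ∪ nbhd H A) →
      ∃ u ∈ p.support, u ∈ Z) :
    ∃ A' : Set V, A'.Nonempty ∧ (H.induce A').Connected ∧
      (a1 ∈ A' ∨ a2 ∈ A') ∧
      (A' ∪ nbhd H A') ⊂ (A ∪ nbhd H A) ∧
      nbhd H A' ⊆ Z ∪ S ∧
      (∃ x y : V, IsMinSep H x y (nbhd H A')) := by
  subst hS
  have hZa1 : a1 ∉ Z := fun h => (hZ h).2 (by simp)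
  have hZa2 : a2 ∉ Z := fun h => (hZ h).2 (by simp)
  obtain ⟨T, hTZS, hT⟩ := (isSep_union_nbhd ha1 ha2 hZa1 hZa2 hsep).exists_isFullSep_subset
  have hTD : T ⊆ A ∪ nbhd H A :=
    hTZS.trans (Set.union_subset (fun z hz => (hZ hz).1) Set.subset_union_right)
  obtain ⟨v, -, hBS⟩ := hB
  change nbhd H (reachAvoiding H (A ∪ nbhd H A) v) = nbhd H A at hBS
  rcases hBS ▸ hT.1.disjoint_or_disjoint (v := v) hTD with hside | hside
  · obtain ⟨A', hne, hconn, haA', hss, hN⟩ := hT.exists_of_disjoint_nbhd ha1 ha2 hTD hside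
    exact ⟨A', hne, hconn, .inl haA', hss, hN ▸ hTZS, a1, a2, hN ▸ hT.isMinSep⟩
  · obtain ⟨A', hne, hconn, haA', hss, hN⟩ := hT.symm.exists_of_disjoint_nbhd ha2 ha1 hTD hside
    exact ⟨A', hne, hconn, .inr haA', hss, hN ▸ hTZS, a2, a1, hN ▸ hT.symm.isMinSep⟩

theorem separator_chunk_splitting {V : Type*} [Fintype V] (H : SimpleGraph V)
    (A : Set V) (hA : A.Nonempty) (hconn : (H.induce A).Connected)
    (S : Set V) (hS : S = nbhd H A)
    (hB : ∃ v : V, v ∉ A ∪ nbhd H A ∧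
        nbhd H {w | ∃ p : H.Walk v w, ∀ u ∈ p.support, u ∉ A ∪ nbhd H A} = S)
    (a1 a2 : V) (ha1 : a1 ∈ A) (ha2 : a2 ∈ A) (hne : a1 ≠ a2)
    (Z : Set V) (hZ : Z ⊆ (A ∪ nbhd H A) \ {a1, a2})
    (hsep : ∀ p : H.Walk a1 a2, (∀ u ∈ p.support, u ∈ A ∪ nbhd H A) →
      ∃ u ∈ p.support, u ∈ Z) :
    ∃ A' : Set V, A'.Nonempty ∧ (H.induce A').Connected ∧
      (a1 ∈ A' ∨ a2 ∈ A') ∧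
      (A' ∪ nbhd H A') ⊂ (A ∪ nbhd H A) ∧
      nbhd H A' ⊆ Z ∪ S ∧
      (∃ x y : V, IsMinSep H x y (nbhd H A')) :=
  separator_chunk_splitting_general H A S hS hB a1 a2 ha1 ha2 Z hZ hsep
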